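/- Let R be a valuation domain. Then the following are equivalent: (i) R is Cohen-Macaulay in the sense of ideals; (ii) R is Cohen-Macaulay in the sense of finitely generated ideals; (iii) the Krull dimension of R is at most 1; (iv) R is weak Bourbaki unmixed. -/

import Mathlib

/-!
Background definitions for non-Noetherian Cohen-Macaulayness
(Koszul grade, heights, weakly associated primes, etc.),
following Asgharzadeh–Tousi, "On the notion of Cohen-Macaulayness
for non Noetherian rings".
-/

noncomputable section
namespace NNCM

universe u

section Koszul

variable {R : Type*} [CommRing R]

/-- The differential of the Koszul cochain complex `Hom_R(K_•(x₁,…,xₙ), M)`, where the module of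
`i`-cochains is realized as functions on strictly increasing `i`-tuples in `Fin n`
(corresponding to the standard basis of the `i`-th exterior power of `Rⁿ`). -/
def koszulD {n : ℕ} (x : Fin n → R) (M : Type*) [AddCommGroup M] [Module R M] (i : ℕ) :
    ((Fin i ↪o Fin n) → M) →ₗ[R] ((Fin (i + 1) ↪o Fin n) → M) where
  toFun f s := ∑ k : Fin (i + 1),
    ((-1 : ℤ) ^ (k : ℕ)) • x (s k) • f ((Fin.succAboveOrderEmb k).trans s)
  map_add' f g := by
    funext s
    simp [smul_add, Finset.sum_add_distrib]
  map_smul' c f := by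
    funext s
    rw [RingHom.id_apply]
    simp only [Pi.smul_apply, Finset.smul_sum]
    refine Finset.sum_congr rfl fun k _ => ?_
    rw [smul_comm c, smul_comm c]

/-- `koszulHNonzero x M i` says that the `i`-th Koszul cohomology
`H^i(Hom_R(K_•(x), M))` is nonzero, i.e. there is an `i`-cocycle which is not an
`i`-coboundary. -/
def koszulHNonzero {n : ℕ} (x : Fin n → R) (M : Type*) [AddCommGroup M] [Module R M] :
    ℕ → Prop
  | 0 => LinearMap.ker (koszulD x M 0) ≠ ⊥
  | (j + 1) => ¬ LinearMap.ker (koszulD x M (j + 1)) ≤ LinearMap.range (koszulD x M j)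

/-- The Koszul grade of a finite sequence `x` on `M`:
`inf { i | H^i(Hom_R(K_•(x), M)) ≠ 0 }` (with `inf ∅ = +∞`). -/
def kgradeSeq {n : ℕ} (x : Fin n → R) (M : Type*) [AddCommGroup M] [Module R M] : ℕ∞ :=
  ⨅ (i : ℕ) (_ : koszulHNonzero x M i), (i : ℕ∞)

/-- The Koszul grade of an arbitrary ideal `a` on `M`: the supremum, over all finite sequences of
elements of `a` (equivalently, over all finitely generated subideals of `a`), of the Koszul
grade of the sequence on `M`. For a finitely generated ideal this agrees with the Koszul grade
computed from any finite generating set. -/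
def kgrade (a : Ideal R) (M : Type*) [AddCommGroup M] [Module R M] : ℕ∞ :=
  ⨆ (m : ℕ) (x : Fin m → R) (_ : ∀ k, x k ∈ a), kgradeSeq x M

/-- The height of an ideal: the infimum of the heights of the primes containing it. -/
def htIdeal (a : Ideal R) : ℕ∞ :=
  ⨅ (p : PrimeSpectrum R) (_ : a ≤ p.asIdeal), Order.height p

/-- `R` is Cohen-Macaulay in the sense of ideals: `ht a = K.grade(a, R)` for every ideal `a`. -/
def CMIdeals (R : Type*) [CommRing R] : Prop :=
  ∀ a : Ideal R, htIdeal a = kgrade a R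

/-- `R` is Cohen-Macaulay in the sense of finitely generated ideals:
`ht a = K.grade(a, R)` for every finitely generated ideal `a`. -/
def CMFGIdeals (R : Type*) [CommRing R] : Prop :=
  ∀ a : Ideal R, a.FG → htIdeal a = kgrade a R

/-- The Krull dimension of the localized module `M_p` over `R_p`, i.e. the Krull dimension
of the ring `R_p / Ann_{R_p}(M_p)`. -/
def dimLoc (M : Type*) [AddCommGroup M] [Module R M] (p : PrimeSpectrum R) : WithBot ℕ∞ :=
  ringKrullDim ((Localization.AtPrime p.asIdeal) ⧸
    Module.annihilator (Localization.AtPrime p.asIdeal)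
      (LocalizedModule p.asIdeal.primeCompl M))

/-- The `M`-height of an ideal `a`: `inf { dim M_p | p prime, a ⊆ p, M_p ≠ 0 }`
(with `inf ∅ = +∞`). -/
def htMod (a : Ideal R) (M : Type*) [AddCommGroup M] [Module R M] : WithBot ℕ∞ :=
  ⨅ (p : PrimeSpectrum R) (_ : a ≤ p.asIdeal) (_ : p ∈ Module.support R M), dimLoc M p

/-- The weakly associated primes of an `R`-module `M`: the primes which are minimal over
the annihilator `(0 :_R m)` of some element `m` of `M`. -/
def wAss (R : Type*) [CommRing R] (M : Type*) [AddCommGroup M] [Module R M] :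
    Set (Ideal R) :=
  { p | ∃ m : M, p ∈ (Ideal.torsionOf R M m).minimalPrimes }

/-- The minimal number of generators of an ideal, as an element of `ℕ∞`. -/
def mu (a : Ideal R) : ℕ∞ :=
  ⨅ (m : ℕ) (_ : ∃ x : Fin m → R, Ideal.span (Set.range x) = a), (m : ℕ∞)

/-- `R` is weak Bourbaki unmixed: for every finitely generated ideal `a` with `μ(a) ≤ ht a`,
the primes minimal over `a` are exactly the weakly associated primes of `R/a`. -/
def WBUnmixed (R : Type*) [CommRing R] : Prop :=
  ∀ a : Ideal R, a.FG → mu a ≤ htIdeal a →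
    a.minimalPrimes = wAss R (R ⧸ a)

/-- `R` is a coherent ring: every finitely generated ideal is finitely presented
as an `R`-module. -/
def IsCoherent (R : Type*) [CommRing R] : Prop :=
  ∀ I : Ideal R, I.FG → Module.FinitePresentation R I

end Koszul

section ExtGrade

variable {R : Type u} [CommRing R]

/-- The Ext grade of an ideal `a` on `M`: `inf { i | Ext^i_R(R/a, M) ≠ 0 }`
(with `inf ∅ = +∞`). -/
def egrade (a : Ideal R) (M : Type u) [AddCommGroup M] [Module R M] : ℕ∞ :=
  ⨅ (i : ℕ) (_ : Nontrivial
      (((Ext R (ModuleCat.{u} R) i).obj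
        (Opposite.op (ModuleCat.of R (R ⧸ a)))).obj (ModuleCat.of R M))), (i : ℕ∞)

/-- The local cohomology grade of an ideal `a` on `M`: `inf { i | H^i_a(M) ≠ 0 }`,
where `H^i_a(M) = colimₙ Ext^i_R(R/aⁿ, M)` is the `i`-th local cohomology module of `M`
with support in `a` (with `inf ∅ = +∞`). -/
def hgrade (a : Ideal R) (M : Type u) [AddCommGroup M] [Module R M] : ℕ∞ :=
  ⨅ (i : ℕ) (_ : Nontrivial ((localCohomology a i).obj (ModuleCat.of R M))), (i : ℕ∞)

end ExtGrade

section Fixed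

/-- The subring of invariants `R^G` of a group `G` acting on a commutative ring `R`
by ring automorphisms. -/
def fixedSubring (G R : Type*) [Group G] [CommRing R] [MulSemiringAction G R] : Subring R where
  carrier := MulAction.fixedPoints G R
  zero_mem' := fun g => smul_zero g
  one_mem' := fun g => smul_one g
  add_mem' := fun {a b} ha hb g => by rw [smul_add, ha g, hb g]
  mul_mem' := fun {a b} ha hb g => by rw [smul_mul', ha g, hb g]
  neg_mem' := fun {a} ha g => by rw [smul_neg, ha g]

end Fixed

end NNCM
end
namespace NNCM


section AuxKoszul

variable {R : Type*} [CommRing R]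

/-- The empty order embedding `Fin 0 ↪o Fin n`. -/
def emb0 (n : ℕ) : Fin 0 ↪o Fin n :=
  OrderEmbedding.ofStrictMono Fin.elim0 (fun a => a.elim0)

instance subsingleton_oe0 (n : ℕ) : Subsingleton (Fin 0 ↪o Fin n) :=
  ⟨fun s t => DFunLike.ext s t (fun a => a.elim0)⟩

instance subsingleton_oe1 (i : ℕ) : Subsingleton (Fin i ↪o Fin 1) :=
  ⟨fun s t => DFunLike.ext s t (fun a => Subsingleton.elim _ _)⟩

lemma isEmpty_oe (i n : ℕ) (h : n < i) : IsEmpty (Fin i ↪o Fin n) :=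
  ⟨fun s => absurd (Fintype.card_le_of_embedding s.toEmbedding) (by simpa using h)⟩

/-- The order embedding `Fin 1 ↪o Fin n` hitting `j`. -/
def emb1 {n : ℕ} (j : Fin n) : Fin 1 ↪o Fin n :=
  OrderEmbedding.ofStrictMono (fun _ => j)
    (fun a b h => by rw [Subsingleton.elim a b] at h; exact absurd h (lt_irrefl _))

lemma koszulD_apply {n : ℕ} (x : Fin n → R) (M : Type*) [AddCommGroup M] [Module R M]
    (i : ℕ) (f : (Fin i ↪o Fin n) → M) (s : Fin (i + 1) ↪o Fin n) :
    koszulD x M i f s = ∑ k : Fin (i + 1),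
      ((-1 : ℤ) ^ (k : ℕ)) • x (s k) • f ((Fin.succAboveOrderEmb k).trans s) := rfl

variable [Nontrivial R]

lemma koszulH0_of_zero {n : ℕ} {x : Fin n → R} (hx : ∀ k, x k = 0) :
    koszulHNonzero x R 0 := by
  show LinearMap.ker (koszulD x R 0) ≠ ⊥
  intro h
  have h1 : (fun _ => (1 : R)) ∈ LinearMap.ker (koszulD x R 0) := by
    rw [LinearMap.mem_ker]
    funext s
    simp [koszulD_apply, hx]
  rw [h, Submodule.mem_bot] at h1
  exact one_ne_zero (congrFun h1 (emb0 n))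

lemma kgradeSeq_le {n : ℕ} {x : Fin n → R} {i : ℕ} (h : koszulHNonzero x R i) :
    kgradeSeq x R ≤ i :=
  iInf₂_le i h

variable [IsDomain R]

lemma not_koszulH0 {c : R} (hc : c ≠ 0) :
    ¬ koszulHNonzero (fun _ : Fin 1 => c) R 0 := by
  show ¬ (LinearMap.ker (koszulD (fun _ : Fin 1 => c) R 0) ≠ ⊥)
  rw [not_ne_iff, eq_bot_iff]
  intro f hf
  rw [LinearMap.mem_ker] at hf
  have h1 := congrFun hf (Fin.castLEOrderEmb le_rfl)
  rw [koszulD_apply] at h1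
  simp only [Fin.sum_univ_succ, Fin.sum_univ_zero, Fin.val_zero, pow_zero, one_smul,
    smul_eq_mul, add_zero, Pi.zero_apply] at h1
  have h2 : f ((Fin.succAboveOrderEmb 0).trans (Fin.castLEOrderEmb le_rfl)) = 0 :=
    (mul_eq_zero.mp h1).resolve_left hc
  rw [Submodule.mem_bot]
  funext s
  rw [Subsingleton.elim s ((Fin.succAboveOrderEmb 0).trans (Fin.castLEOrderEmb le_rfl)), h2]
  rfl

lemma koszulH1_unit : ∀ i, ¬ koszulHNonzero (fun _ : Fin 1 => (1 : R)) R i := by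
  intro i
  match i with
  | 0 => exact not_koszulH0 one_ne_zero
  | 1 =>
    show ¬ ¬ (LinearMap.ker (koszulD (fun _ : Fin 1 => (1 : R)) R 1) ≤
      LinearMap.range (koszulD (fun _ : Fin 1 => (1 : R)) R 0))
    rw [not_not]
    intro f _
    refine ⟨fun _ => f (Fin.castLEOrderEmb le_rfl), ?_⟩
    funext s
    rw [koszulD_apply]
    simp only [Fin.sum_univ_succ, Fin.sum_univ_zero, Fin.val_zero, pow_zero, one_smul,
      smul_eq_mul, one_mul, add_zero]
    rw [Subsingleton.elim s (Fin.castLEOrderEmb le_rfl)]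
  | (j + 2) =>
    show ¬ ¬ (LinearMap.ker (koszulD (fun _ : Fin 1 => (1 : R)) R (j + 2)) ≤
      LinearMap.range (koszulD (fun _ : Fin 1 => (1 : R)) R (j + 1)))
    rw [not_not]
    intro f _
    refine ⟨0, ?_⟩
    funext s
    exact ((isEmpty_oe (j + 2) 1 (by omega)).false s).elim

lemma kgradeSeq_unit : kgradeSeq (fun _ : Fin 1 => (1 : R)) R = ⊤ := by
  rw [kgradeSeq]
  simp [koszulH1_unit]

lemma one_le_kgradeSeq {c : R} (hc : c ≠ 0) :
    1 ≤ kgradeSeq (fun _ : Fin 1 => c) R := by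
  refine le_iInf₂ fun i hi => ?_
  match i with
  | 0 => exact absurd hi (not_koszulH0 hc)
  | (j + 1) => exact_mod_cast Nat.succ_le_succ (Nat.zero_le j)

end AuxKoszul

section AuxVal

variable {R : Type*} [CommRing R] [IsDomain R]

lemma kgradeSeq_le_one (hval : ∀ a b : Ideal R, a ≤ b ∨ b ≤ a)
    {a : Ideal R} (ha : a ≠ ⊤) {n : ℕ} {x : Fin n → R}
    (hx : ∀ k, x k ∈ a) : kgradeSeq x R ≤ 1 := by
  by_cases hz : ∀ k, x k = 0
  · exact (kgradeSeq_le (koszulH0_of_zero hz)).trans zero_le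
  push_neg at hz
  obtain ⟨k0, hk0⟩ := hz
  -- find a maximal generator
  obtain ⟨j, -, hjmax⟩ := Set.Finite.exists_maximalFor (fun k => Ideal.span {x k})
    (Set.univ : Set (Fin n)) Set.finite_univ ⟨k0, trivial⟩
  have hle : ∀ k, x k ∈ Ideal.span {x j} := by
    intro k
    rcases hval (Ideal.span {x k}) (Ideal.span {x j}) with h | h
    · exact h (Ideal.subset_span rfl)
    · exact (hjmax (Set.mem_univ k) h) (Ideal.subset_span rfl)
  have hxj : x j ≠ 0 := by
    intro h0
    apply hk0
    have := hle k0
    rw [h0, Ideal.span_singleton_eq_bot.mpr rfl] at this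
    simpa using this
  -- the scalars
  set r : Fin n → R := fun k => if h : k = j then 1 else (Ideal.mem_span_singleton'.mp (hle k)).choose with hr
  have hrx : ∀ k, x k = r k * x j := by
    intro k
    by_cases h : k = j
    · subst h; simp [hr]
    · have := (Ideal.mem_span_singleton'.mp (hle k)).choose_spec
      simp [hr, h, this]
  -- H^1 is nonzero
  apply kgradeSeq_le (i := 1)
  show ¬ (LinearMap.ker (koszulD x R 1) ≤ LinearMap.range (koszulD x R 0))
  intro hrange
  have hf : (fun s => r (s 0) : (Fin 1 ↪o Fin n) → R) ∈ LinearMap.ker (koszulD x R 1) := by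
    rw [LinearMap.mem_ker]
    funext s
    rw [koszulD_apply]
    rw [Fin.sum_univ_succ, Fin.sum_univ_succ, Fin.sum_univ_zero]
    simp only [Fin.val_zero, pow_zero, one_smul, Fin.val_succ, pow_succ, pow_zero, one_mul,
      neg_smul, smul_eq_mul, RelEmbedding.trans_apply, Fin.succAboveOrderEmb_apply,
      Pi.zero_apply, add_zero, Fin.succ_zero_eq_one]
    have e0 : ((0 : Fin 2).succAbove (0 : Fin 1)) = 1 := rfl
    have e1 : ((1 : Fin 2).succAbove (0 : Fin 1)) = 0 := rfl
    rw [e0, e1, hrx (s 0), hrx (s 1)]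
    have hv : ((1 : Fin (1 + 1)) : ℕ) = 1 := rfl
    simp only [hv, pow_one, neg_smul, one_smul]
    ring
  obtain ⟨g, hg⟩ := hrange hf
  have h1 := congrFun hg (emb1 j)
  rw [koszulD_apply] at h1
  simp only [Fin.sum_univ_succ, Fin.sum_univ_zero, Fin.val_zero, pow_zero, one_smul,
    smul_eq_mul, add_zero] at h1
  have hj1 : r ((emb1 j) 0) = 1 := by simp [hr, emb1, OrderEmbedding.ofStrictMono]
  rw [hj1] at h1
  have : IsUnit (x ((emb1 j) 0)) := IsUnit.of_mul_eq_one _ h1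
  have : IsUnit (x j) := by simpa [emb1, OrderEmbedding.ofStrictMono] using this
  exact ha (a.eq_top_of_isUnit_mem (hx j) this)

lemma kgrade_bot : kgrade (⊥ : Ideal R) R = 0 := by
  refine le_antisymm ?_ zero_le
  refine iSup_le fun m => iSup_le fun x => iSup_le fun hx => ?_
  exact kgradeSeq_le (koszulH0_of_zero (fun k => by simpa using hx k))

lemma kgrade_top {a : Ideal R} (ha : a = ⊤) : kgrade a R = ⊤ := by
  have : kgradeSeq (fun _ : Fin 1 => (1 : R)) R ≤ kgrade a R :=
    le_iSup_of_le 1 (le_iSup_of_le (fun _ => (1 : R))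
      (le_iSup_of_le (fun _ => by simp [ha]) le_rfl))
  rw [kgradeSeq_unit] at this
  exact top_le_iff.mp this

lemma kgrade_eq_one (hval : ∀ a b : Ideal R, a ≤ b ∨ b ≤ a)
    {a : Ideal R} (h0 : a ≠ ⊥) (h1 : a ≠ ⊤) : kgrade a R = 1 := by
  refine le_antisymm ?_ ?_
  · exact iSup_le fun m => iSup_le fun x => iSup_le fun hx => kgradeSeq_le_one hval h1 hx
  · obtain ⟨c, hc, hc0⟩ := Submodule.exists_mem_ne_zero_of_ne_bot h0
    calc (1 : ℕ∞) ≤ kgradeSeq (fun _ : Fin 1 => c) R := one_le_kgradeSeq hc0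
    _ ≤ kgrade a R := le_iSup_of_le 1 (le_iSup_of_le (fun _ => c)
        (le_iSup_of_le (fun _ => hc) le_rfl))

/-- Height facts -/
lemma htIdeal_bot : htIdeal (⊥ : Ideal R) = 0 := by
  refine le_antisymm ?_ zero_le
  refine iInf₂_le_of_le ⊥ bot_le (le_of_eq ?_)
  rw [Order.height_eq_zero]
  exact isMin_bot

lemma htIdeal_top : htIdeal (⊤ : Ideal R) = ⊤ := by
  refine le_antisymm le_top (le_iInf₂ fun p hp => ?_)
  exact absurd (top_le_iff.mp hp) p.isPrime.ne_top

lemma one_le_height {p : PrimeSpectrum R} (h : p.asIdeal ≠ ⊥) : 1 ≤ Order.height p := by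
  rw [ENat.one_le_iff_ne_zero, Ne, Order.height_eq_zero]
  intro hm
  have : p ≤ (⊥ : PrimeSpectrum R) := hm bot_le
  exact h (le_antisymm this bot_le)

lemma two_le_height {p q : PrimeSpectrum R} (h0 : p.asIdeal ≠ ⊥) (hpq : p < q) :
    2 ≤ Order.height q := by
  have hbp : (⊥ : PrimeSpectrum R) < p := by
    refine lt_of_le_of_ne bot_le (fun h => ?_)
    exact h0 (congrArg PrimeSpectrum.asIdeal h.symm)
  let s := ((RelSeries.singleton {(a, b) : PrimeSpectrum R × PrimeSpectrum R | a < b} ⊥).snoc p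
    (by simpa using hbp)).snoc q (by simpa using hpq)
  have hlen : s.length = 2 := rfl
  have hlast : s.last = q := RelSeries.last_snoc _ _ _
  have := Order.length_le_height_last (p := s)
  rw [hlen, hlast] at this
  exact_mod_cast this

lemma height_le_one_of_dim (hdim : ringKrullDim R ≤ 1) (p : PrimeSpectrum R) :
    Order.height p ≤ 1 := by
  have h := (Order.height_le_krullDim p).trans hdim
  exact_mod_cast h

lemma htIdeal_eq_one (hdim : ringKrullDim R ≤ 1) {a : Ideal R} (h0 : a ≠ ⊥) (h1 : a ≠ ⊤) :
    htIdeal a = 1 := by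
  refine le_antisymm ?_ ?_
  · obtain ⟨M, hM, haM⟩ := Ideal.exists_le_maximal a h1
    exact iInf₂_le_of_le ⟨M, hM.isPrime⟩ haM (height_le_one_of_dim hdim _)
  · refine le_iInf₂ fun p hp => one_le_height (fun hb => ?_)
    exact h0 (le_antisymm (hb ▸ hp) bot_le)

lemma unique_nonzero_prime (hval : ∀ a b : Ideal R, a ≤ b ∨ b ≤ a)
    (hdim : ringKrullDim R ≤ 1) {p q : Ideal R} (hp : p.IsPrime) (hq : q.IsPrime)
    (hp0 : p ≠ ⊥) (hq0 : q ≠ ⊥) : p = q := by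
  by_contra hne
  have key : ∀ p q : PrimeSpectrum R, p.asIdeal ≠ ⊥ → p < q → False := by
    intro p q h0 hlt
    have := (two_le_height h0 hlt).trans (height_le_one_of_dim hdim q)
    exact absurd this (by decide)
  rcases hval p q with h | h
  · exact key ⟨p, hp⟩ ⟨q, hq⟩ hp0
      ((PrimeSpectrum.asIdeal_lt_asIdeal _ _).mp (lt_of_le_of_ne h hne))
  · exact key ⟨q, hq⟩ ⟨p, hp⟩ hq0
      ((PrimeSpectrum.asIdeal_lt_asIdeal _ _).mp (lt_of_le_of_ne h (Ne.symm hne)))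

lemma minimalPrimes_eq_S (hval : ∀ a b : Ideal R, a ≤ b ∨ b ≤ a)
    (hdim : ringKrullDim R ≤ 1) {b : Ideal R} (h0 : b ≠ ⊥) (h1 : b ≠ ⊤) :
    b.minimalPrimes = {p : Ideal R | p.IsPrime ∧ p ≠ ⊥} := by
  ext p
  constructor
  · rintro ⟨⟨hp, hbp⟩, -⟩
    refine ⟨hp, fun hb => h0 (le_antisymm (hb ▸ hbp) bot_le)⟩
  · rintro ⟨hp, hp0⟩
    obtain ⟨M, hM, hbM⟩ := Ideal.exists_le_maximal b h1
    have hM0 : M ≠ ⊥ := fun h => h0 (le_antisymm (h ▸ hbM) bot_le)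
    have hMp : M = p := unique_nonzero_prime hval hdim hM.isPrime hp hM0 hp0
    refine ⟨⟨hp, hMp ▸ hbM⟩, ?_⟩
    rintro q ⟨hq, hbq⟩ hqp
    have hq0 : q ≠ ⊥ := fun h => h0 (le_antisymm (h ▸ hbq) bot_le)
    exact (unique_nonzero_prime hval hdim hp hq hp0 hq0).le

lemma minimalPrimes_top : (⊤ : Ideal R).minimalPrimes = ∅ := by
  ext p
  simp only [Set.mem_empty_iff_false, iff_false]
  rintro ⟨⟨hp, hbp⟩, -⟩
  exact hp.ne_top (top_le_iff.mp hbp)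

lemma minimalPrimes_bot : (⊥ : Ideal R).minimalPrimes = {(⊥ : Ideal R)} := by
  ext p
  constructor
  · rintro ⟨⟨hp, -⟩, hmin⟩
    exact le_antisymm (hmin ⟨Ideal.bot_prime, le_rfl⟩ bot_le) bot_le
  · rintro rfl
    exact ⟨⟨Ideal.bot_prime, le_rfl⟩, fun q _ _ => bot_le⟩

lemma mem_torsionOf_quotient {a : Ideal R} {r : R} (s : R) :
    s ∈ Ideal.torsionOf R (R ⧸ a) (Ideal.Quotient.mk a r) ↔ s * r ∈ a := by
  rw [Ideal.mem_torsionOf_iff]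
  show s • (Ideal.Quotient.mk a r) = 0 ↔ _
  rw [← Ideal.Quotient.mk_eq_mk, ← Submodule.Quotient.mk_smul, smul_eq_mul,
    Submodule.Quotient.mk_eq_zero]

lemma torsionOf_quotient_one (a : Ideal R) :
    Ideal.torsionOf R (R ⧸ a) (Ideal.Quotient.mk a 1) = a := by
  ext s
  rw [mem_torsionOf_quotient, mul_one]

lemma wAss_eq_S (hval : ∀ a b : Ideal R, a ≤ b ∨ b ≤ a)
    (hdim : ringKrullDim R ≤ 1) {a : Ideal R} (h0 : a ≠ ⊥) (h1 : a ≠ ⊤) :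
    wAss R (R ⧸ a) = {p : Ideal R | p.IsPrime ∧ p ≠ ⊥} := by
  ext p
  constructor
  · rintro ⟨m, hm⟩
    obtain ⟨r, rfl⟩ := Ideal.Quotient.mk_surjective m
    set b : Ideal R := Ideal.torsionOf R (R ⧸ a) (Ideal.Quotient.mk a r) with hb
    have hab : a ≤ b := fun s hs => (mem_torsionOf_quotient s).mpr (a.mul_mem_right r hs)
    by_cases hbtop : b = ⊤
    · rw [hbtop, minimalPrimes_top] at hm
      exact hm.elim
    · have hb0 : b ≠ ⊥ := fun h => h0 (le_antisymm (h ▸ hab) bot_le)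
      rw [minimalPrimes_eq_S hval hdim hb0 hbtop] at hm
      exact hm
  · rintro hp
    refine ⟨Ideal.Quotient.mk a 1, ?_⟩
    rw [torsionOf_quotient_one, minimalPrimes_eq_S hval hdim h0 h1]
    exact hp

lemma wAss_bot : wAss R (R ⧸ (⊥ : Ideal R)) = {(⊥ : Ideal R)} := by
  ext p
  constructor
  · rintro ⟨m, hm⟩
    obtain ⟨r, rfl⟩ := Ideal.Quotient.mk_surjective m
    by_cases hr : r = 0
    · subst hr
      have h : Ideal.torsionOf R (R ⧸ (⊥ : Ideal R)) (Ideal.Quotient.mk ⊥ 0) = ⊤ := by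
        ext s
        rw [mem_torsionOf_quotient]
        simp
      rw [h, minimalPrimes_top] at hm
      exact hm.elim
    · have h : Ideal.torsionOf R (R ⧸ (⊥ : Ideal R)) (Ideal.Quotient.mk ⊥ r) = ⊥ := by
        ext s
        rw [mem_torsionOf_quotient]
        simp [Ideal.mem_bot, mul_eq_zero, hr]
      rw [h, minimalPrimes_bot] at hm
      exact hm
  · rintro rfl
    refine ⟨Ideal.Quotient.mk ⊥ 1, ?_⟩
    rw [torsionOf_quotient_one, minimalPrimes_bot]
    rfl

lemma wAss_top : wAss R (R ⧸ (⊤ : Ideal R)) = ∅ := by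
  ext p
  simp only [Set.mem_empty_iff_false, iff_false]
  rintro ⟨m, hm⟩
  obtain ⟨r, rfl⟩ := Ideal.Quotient.mk_surjective m
  have h : Ideal.torsionOf R (R ⧸ (⊤ : Ideal R)) (Ideal.Quotient.mk ⊤ r) = ⊤ := by
    ext s
    rw [mem_torsionOf_quotient]
    simp
  rw [h, minimalPrimes_top] at hm
  exact hm

end AuxVal


lemma exists_chain_of_not_dim_le_one {R : Type*} [CommRing R] [IsDomain R]
    (hdim : ¬ ringKrullDim R ≤ 1) :
    ∃ p₁ p₂ : PrimeSpectrum R, p₁.asIdeal ≠ ⊥ ∧ p₁ < p₂ := by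
  have hex : ∃ p : PrimeSpectrum R, 2 ≤ Order.height p := by
    have hall : ¬ ∀ p : PrimeSpectrum R, Order.height p ≤ 1 := by
      intro hall
      apply hdim
      rw [show ringKrullDim R = Order.krullDim (PrimeSpectrum R) from rfl,
        Order.krullDim_eq_iSup_height_of_nonempty]
      have h1 : (⨆ p : PrimeSpectrum R, Order.height p) ≤ (1 : ℕ∞) := iSup_le hall
      exact WithBot.coe_le_coe.mpr h1
    push_neg at hall
    obtain ⟨p, hp⟩ := hall
    refine ⟨p, ?_⟩
    rw [show (2 : ℕ∞) = 1 + 1 from rfl]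
    exact (ENat.add_one_le_iff (by simp)).mpr hp
  obtain ⟨p, hp2⟩ := hex
  obtain ⟨s, hlast, hlen⟩ := Order.exists_series_of_le_height p (n := 2) (by exact_mod_cast hp2)
  have h01 : s ⟨0, by omega⟩ < s ⟨1, by omega⟩ := s.step ⟨0, by omega⟩
  have h12 : s ⟨1, by omega⟩ < s ⟨2, by omega⟩ := s.step ⟨1, by omega⟩
  refine ⟨s ⟨1, by omega⟩, s ⟨2, by omega⟩, ?_, h12⟩
  intro hb
  have hle : s ⟨1, by omega⟩ ≤ s ⟨0, by omega⟩ := by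
    show (s ⟨1, by omega⟩).asIdeal ≤ (s ⟨0, by omega⟩).asIdeal
    rw [hb]
    exact bot_le
  exact h01.not_ge hle

/-- For a valuation domain `R` (an integral domain whose ideals are totally
ordered by inclusion), the following are equivalent: (i) `R` is Cohen-Macaulay in the sense of
ideals; (ii) `R` is Cohen-Macaulay in the sense of finitely generated ideals; (iii) the Krull
dimension of `R` is at most `1`; (iv) `R` is weak Bourbaki unmixed. -/
theorem valuationDomain_tfae {R : Type*} [CommRing R] [IsDomain R]
    (hval : ∀ a b : Ideal R, a ≤ b ∨ b ≤ a) :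
    List.TFAE [CMIdeals R, CMFGIdeals R, ringKrullDim R ≤ 1, WBUnmixed R] := by
  tfae_have 1 → 2 := fun h a _ => h a
  tfae_have 3 → 1 := by
    intro hdim a
    by_cases h0 : a = ⊥
    · subst h0; rw [htIdeal_bot, kgrade_bot]
    by_cases h1 : a = ⊤
    · subst h1; rw [htIdeal_top, kgrade_top rfl]
    · rw [htIdeal_eq_one hdim h0 h1, kgrade_eq_one hval h0 h1]
  tfae_have 2 → 3 := by
    intro hcm
    by_contra hdim
    obtain ⟨p₁, p₂, hp10, hlt⟩ := exists_chain_of_not_dim_le_one hdim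
    have hnle : ¬ p₂.asIdeal ≤ p₁.asIdeal := fun hle => hlt.not_ge hle
    obtain ⟨b, hbp2, hbp1⟩ := SetLike.not_le_iff_exists.mp hnle
    have hb0 : b ≠ 0 := fun h => hbp1 (h ▸ p₁.asIdeal.zero_mem)
    have hfg : (Ideal.span {b}).FG := ⟨{b}, by simp⟩
    have ha_bot : Ideal.span {b} ≠ ⊥ := by
      rw [Ne, Ideal.span_singleton_eq_bot]; exact hb0
    have hbspan : Ideal.span {b} ≤ p₂.asIdeal := by
      rw [Ideal.span_le]; simpa using hbp2
    have ha_top : Ideal.span {b} ≠ ⊤ := fun h =>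
      p₂.isPrime.ne_top (top_le_iff.mp (h ▸ hbspan))
    have hhk := hcm (Ideal.span {b}) hfg
    rw [kgrade_eq_one hval ha_bot ha_top] at hhk
    have h2 : (2 : ℕ∞) ≤ htIdeal (Ideal.span {b}) := by
      refine le_iInf₂ fun p hp => ?_
      have hbp : b ∈ p.asIdeal := hp (Ideal.subset_span rfl)
      have hp1p : p₁ < p := by
        rcases hval p.asIdeal p₁.asIdeal with h | h
        · exact absurd (h hbp) hbp1
        · refine (PrimeSpectrum.asIdeal_lt_asIdeal _ _).mp (lt_of_le_of_ne h ?_)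
          intro hh
          exact hbp1 (hh ▸ hbp)
      exact two_le_height hp10 hp1p
    rw [hhk] at h2
    exact absurd h2 (by decide)
  tfae_have 3 → 4 := by
    intro hdim a _ _
    by_cases h0 : a = ⊥
    · subst h0; rw [minimalPrimes_bot, wAss_bot]
    by_cases h1 : a = ⊤
    · subst h1; rw [minimalPrimes_top, wAss_top]
    · rw [minimalPrimes_eq_S hval hdim h0 h1, wAss_eq_S hval hdim h0 h1]
  tfae_have 4 → 3 := by
    intro hwb
    by_contra hdim
    obtain ⟨p₁, p₂, hp10, hlt⟩ := exists_chain_of_not_dim_le_one hdim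
    have hnle : ¬ p₂.asIdeal ≤ p₁.asIdeal := fun hle => hlt.not_ge hle
    obtain ⟨b, hbp2, hbp1⟩ := SetLike.not_le_iff_exists.mp hnle
    have hb0 : b ≠ 0 := fun h => hbp1 (h ▸ p₁.asIdeal.zero_mem)
    obtain ⟨a0, ha0p1, ha0⟩ := Submodule.exists_mem_ne_zero_of_ne_bot hp10
    have hab0 : a0 * b ≠ 0 := mul_ne_zero ha0 hb0
    have hfg : (Ideal.span {a0 * b}).FG := ⟨{a0 * b}, by simp⟩
    have hmu : mu (Ideal.span {a0 * b}) ≤ htIdeal (Ideal.span {a0 * b}) := by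
      have h1 : mu (Ideal.span {a0 * b}) ≤ (1 : ℕ) :=
        iInf₂_le 1 ⟨fun _ => a0 * b, by rw [Set.range_const]⟩
      have h2 : ((1 : ℕ) : ℕ∞) ≤ htIdeal (Ideal.span {a0 * b}) := by
        refine le_iInf₂ fun p hp => ?_
        have hmem : a0 * b ∈ p.asIdeal := hp (Ideal.subset_span rfl)
        have hne : p.asIdeal ≠ ⊥ := by
          intro hbot
          rw [hbot] at hmem
          exact hab0 (by simpa using hmem)
        exact_mod_cast one_le_height hne
      exact h1.trans h2
    have h := hwb (Ideal.span {a0 * b}) hfg hmu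
    -- a minimal prime of (b)
    have hbspan : Ideal.span {b} ≤ p₂.asIdeal := by
      rw [Ideal.span_le]; simpa using hbp2
    haveI := p₂.isPrime
    obtain ⟨qb, hqb, -⟩ := Ideal.exists_minimalPrimes_le hbspan
    -- torsion computation
    have htors : Ideal.torsionOf R (R ⧸ Ideal.span {a0 * b})
        (Ideal.Quotient.mk (Ideal.span {a0 * b}) a0) = Ideal.span {b} := by
      ext s
      rw [mem_torsionOf_quotient]
      constructor
      · intro hs
        obtain ⟨t, ht⟩ := Ideal.mem_span_singleton'.mp hs
        refine Ideal.mem_span_singleton'.mpr ⟨t, mul_right_cancel₀ ha0 ?_⟩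
        rw [← ht]; ring
      · intro hs
        obtain ⟨t, ht⟩ := Ideal.mem_span_singleton'.mp hs
        refine Ideal.mem_span_singleton'.mpr ⟨t, ?_⟩
        rw [← ht]; ring
    have hqwass : qb ∈ wAss R (R ⧸ Ideal.span {a0 * b}) :=
      ⟨Ideal.Quotient.mk (Ideal.span {a0 * b}) a0, htors ▸ hqb⟩
    rw [← h] at hqwass
    -- a minimal prime of (a0 * b) inside p₁
    have hIp1 : Ideal.span {a0 * b} ≤ p₁.asIdeal := by
      rw [Ideal.span_le]
      simpa using p₁.asIdeal.mul_mem_right b ha0p1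
    haveI := p₁.isPrime
    obtain ⟨p0, hp0, hp0le⟩ := Ideal.exists_minimalPrimes_le hIp1
    have heq : p0 = qb := by
      rcases hval p0 qb with hle | hle
      · exact le_antisymm hle (hqwass.2 hp0.1 hle)
      · exact le_antisymm (hp0.2 hqwass.1 hle) hle
    have hbq : b ∈ qb := hqb.1.2 (Ideal.subset_span rfl)
    exact hbp1 (hp0le (heq ▸ hbq))
  tfae_finish

end NNCM
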